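/- arXiv:math/9904186 — 8 statements merged into one kernel-verified Lean document; each statement's English description precedes it below -/
import Mathlib

section
/- For every positive integer γ, the sum Σ_{μ=0}^{γ−1} 1/(√(μ+1) · √(γ−μ)) is at most π. -/
/-!
The function `x ↦ arcsin ((2x - γ)/γ)` has derivative `1/√(x(γ - x))` on `(0, γ)`. By the mean
value theorem its increment over `[μ, μ + 1]` is `1/√(c(γ - c))` for some `c` in between, and
`c(γ - c) ≤ (μ + 1)(γ - μ)`, so each summand is at most that increment. The sum therefore
is at most a difference of two values of `arcsin`, hence at most `π`.
-/

open Real Finset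

noncomputable def arcsinRescaled (g x : ℝ) : ℝ := arcsin ((2 * x - g) / g)

lemma hasDerivAt_arcsinRescaled {g x : ℝ} (hx : 0 < x) (hxg : x < g) :
    HasDerivAt (arcsinRescaled g) (1 / √(x * (g - x))) x := by
  have hg : 0 < g := hx.trans hxg
  have hne_neg_one : (2 * x - g) / g ≠ -1 := by
    rw [ne_eq, div_eq_iff hg.ne']; linarith
  have hne_one : (2 * x - g) / g ≠ 1 := by
    rw [ne_eq, div_eq_iff hg.ne']; linarith
  have hinner : HasDerivAt (fun y => (2 * y - g) / g) (2 / g) x := by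
    simpa using (((hasDerivAt_id x).const_mul 2).sub_const g).div_const g
  refine ((hasDerivAt_arcsin hne_neg_one hne_one).comp x hinner).congr_deriv ?_
  have hsq : 1 - ((2 * x - g) / g) ^ 2 = (2 / g) ^ 2 * (x * (g - x)) := by
    field_simp; ring
  rw [hsq, sqrt_mul (sq_nonneg _), sqrt_sq (by positivity)]
  field_simp

lemma one_div_sqrt_mul_sqrt_le_arcsinRescaled_sub {g μ : ℝ} (hμ : 0 ≤ μ) (hμg : μ + 1 ≤ g) :
    1 / (√(μ + 1) * √(g - μ)) ≤ arcsinRescaled g (μ + 1) - arcsinRescaled g μ := by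
  have hcont : ContinuousOn (arcsinRescaled g) (Set.Icc μ (μ + 1)) :=
    (continuous_arcsin.comp
      (((continuous_const.mul continuous_id).sub continuous_const).div_const g)).continuousOn
  obtain ⟨c, ⟨hμc, hc⟩, hslope⟩ := exists_hasDerivAt_eq_slope (arcsinRescaled g) _
    (lt_add_one μ) hcont fun x hx =>
      hasDerivAt_arcsinRescaled (hμ.trans_lt hx.1) (hx.2.trans_le hμg)
  rw [add_sub_cancel_left, div_one] at hslope
  have hc_pos : 0 < c * (g - c) := mul_pos (hμ.trans_lt hμc) (by linarith)
  have hc_le : c * (g - c) ≤ (μ + 1) * (g - μ) :=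
    mul_le_mul hc.le (by linarith) (by linarith) (by linarith)
  rw [← hslope, ← sqrt_mul (by linarith)]
  exact one_div_le_one_div_of_le (sqrt_pos.mpr hc_pos) (sqrt_le_sqrt hc_le)

theorem lemma_A2_bound_general (γ : ℕ) :
    ∑ μ ∈ Finset.range γ,
        1 / (Real.sqrt ((μ : ℝ) + 1) * Real.sqrt ((γ : ℝ) - (μ : ℝ))) ≤ Real.pi := by
  set F : ℕ → ℝ := fun n => arcsinRescaled γ n
  calc ∑ μ ∈ range γ, 1 / (√((μ : ℝ) + 1) * √((γ : ℝ) - μ))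
      ≤ ∑ μ ∈ range γ, (F (μ + 1) - F μ) := by
        refine sum_le_sum fun μ hμ => ?_
        simpa [F] using one_div_sqrt_mul_sqrt_le_arcsinRescaled_sub (Nat.cast_nonneg μ)
          (by exact_mod_cast mem_range.mp hμ : (μ : ℝ) + 1 ≤ γ)
    _ = F γ - F 0 := sum_range_sub F γ
    _ ≤ π := by
        simp only [F, arcsinRescaled]
        linarith [arcsin_le_pi_div_two ((2 * (γ : ℝ) - γ) / γ),
          neg_pi_div_two_le_arcsin ((2 * ((0 : ℕ) : ℝ) - γ) / γ)]

/-- Uniform bound form of Lemma A2 of the paper: for every positive integer `γ`,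
`∑_{μ=0}^{γ−1} 1/(√(μ+1)·√(γ−μ)) ≤ π`. -/
theorem lemma_A2_bound (γ : ℕ) (hγ : 0 < γ) :
    ∑ μ ∈ Finset.range γ,
        1 / (Real.sqrt ((μ : ℝ) + 1) * Real.sqrt ((γ : ℝ) - (μ : ℝ))) ≤ Real.pi :=
  lemma_A2_bound_general γ
end

section
/- Let c > 0 be a real number, let N ≥ 2 be an integer, and let (u_μ) and (v_μ) be complex numbers satisfying |u_μ| ≤ c^μ/√(μ+1) and |v_μ| ≤ c^μ/√(μ+1) for all integers μ with 1 ≤ μ ≤ N−1. Then Σ_{μ=1}^{N−1} |u_{N−μ}| · |v_μ| ≤ π c^N. -/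
/-!
The summand `1 / √(x (a - x))` is the derivative of `G x = arccos (1 - 2 x / a)`, which increases
from `G 0 = 0` to `G (a / 2) = π / 2`. The summand is decreasing on `(0, a / 2]`, so by the mean
value theorem its value at an integer `k ≤ a / 2` is at most `G k - G (k - 1)`, and the sum over
`k ≤ a / 2` telescopes to at most `π / 2`. The reflection `k ↦ n - k` bounds the other half of
`∑_{k=1}^{n-1} 1 / √(k (n - k))` in the same way, giving `π`; the convolution estimate then
follows from `(i + 1) (j + 1) ≥ i j`.
-/

open Real Finset

lemma hasDerivAt_arccos_one_sub_two_mul_div {a x : ℝ} (hx : 0 < x) (hxa : x < a) :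
    HasDerivAt (fun y => arccos (1 - 2 * y / a)) (√(x * (a - x)))⁻¹ x := by
  have ha : 0 < a := hx.trans hxa
  have hinner : HasDerivAt (fun y : ℝ => 1 - 2 * y / a) (-(2 / a)) x := by
    simpa using ((hasDerivAt_id x).const_mul 2).div_const a |>.const_sub 1
  have hlt : 2 * x / a < 2 := by rw [div_lt_iff₀ ha]; linarith
  have hne_neg : 1 - 2 * x / a ≠ -1 := ne_of_gt (by linarith)
  have hne_one : 1 - 2 * x / a ≠ 1 := ne_of_lt (by linarith [show 0 < 2 * x / a by positivity])
  refine ((hasDerivAt_arccos hne_neg hne_one).comp x hinner).congr_deriv ?_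
  have hsq : 1 - (1 - 2 * x / a) ^ 2 = (2 / a) ^ 2 * (x * (a - x)) := by
    field_simp; ring
  have hpos : 0 < √(x * (a - x)) := sqrt_pos.2 (mul_pos hx (by linarith))
  rw [hsq, sqrt_mul (by positivity), sqrt_sq (by positivity)]
  field_simp

lemma sub_mul_inv_sqrt_le_arccos_sub {a s t : ℝ} (hs : 0 ≤ s) (hst : s < t) (ht : t ≤ a / 2) :
    (t - s) * (√(t * (a - t)))⁻¹ ≤ arccos (1 - 2 * t / a) - arccos (1 - 2 * s / a) := by
  obtain ⟨ξ, ⟨hsξ, hξt⟩, hslope⟩ := exists_hasDerivAt_eq_slope (fun y => arccos (1 - 2 * y / a))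
    (fun x => (√(x * (a - x)))⁻¹) hst (by fun_prop)
    (fun x hx => hasDerivAt_arccos_one_sub_two_mul_div (hs.trans_lt hx.1) (by linarith [hx.2]))
  have hξ : 0 < ξ := hs.trans_lt hsξ
  -- `x (a - x)` increases on `[0, a / 2]`, so the derivative at `ξ < t` dominates its value at `t`.
  have hmono : (√(t * (a - t)))⁻¹ ≤ (√(ξ * (a - ξ)))⁻¹ :=
    inv_anti₀ (sqrt_pos.2 (by nlinarith)) (sqrt_le_sqrt (by nlinarith))
  calc (t - s) * (√(t * (a - t)))⁻¹ ≤ (t - s) * (√(ξ * (a - ξ)))⁻¹ :=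
        mul_le_mul_of_nonneg_left hmono (by linarith)
    _ = arccos (1 - 2 * t / a) - arccos (1 - 2 * s / a) := by
        rw [hslope, mul_div_cancel₀ _ (by linarith)]

lemma sum_Ioc_inv_sqrt_mul_sub_le_arccos {a : ℝ} {m : ℕ} (hm : 2 * (m : ℝ) ≤ a) :
    ∑ k ∈ Ioc 0 m, (√(k * (a - k)))⁻¹ ≤ arccos (1 - 2 * m / a) := by
  induction m with
  | zero => simp
  | succ m ih =>
    push_cast at hm ⊢
    have hstep := sub_mul_inv_sqrt_le_arccos_sub (a := a) (m.cast_nonneg) (lt_add_one (m : ℝ))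
      (by linarith)
    rw [sum_Ioc_succ_top m.zero_le]
    push_cast
    linarith [ih (by linarith), show (m : ℝ) + 1 - m = 1 by ring]

lemma sum_Ioc_inv_sqrt_mul_sub_le_pi_div_two {a : ℝ} {m : ℕ} (hm : 2 * (m : ℝ) ≤ a) :
    ∑ k ∈ Ioc 0 m, (√(k * (a - k)))⁻¹ ≤ π / 2 := by
  have ha : 0 ≤ a := by linarith [(m.cast_nonneg : (0 : ℝ) ≤ m)]
  calc ∑ k ∈ Ioc 0 m, (√(k * (a - k)))⁻¹ ≤ arccos (1 - 2 * m / a) :=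
        sum_Ioc_inv_sqrt_mul_sub_le_arccos hm
    _ ≤ arccos 0 := antitone_arccos (sub_nonneg.2 (div_le_one_of_le₀ hm ha))
    _ = π / 2 := arccos_zero

lemma sum_Icc_inv_sqrt_mul_sub_le_pi (n : ℕ) :
    ∑ k ∈ Icc 1 (n - 1), (√(k * (n - k)))⁻¹ ≤ π := by
  set m := n / 2
  have hreflect : ∑ k ∈ Ioc m (n - 1), (√(k * (n - k)))⁻¹
      = ∑ k ∈ Ioc 0 (n - 1 - m), (√(k * (n - k)))⁻¹ := by
    refine sum_nbij' (fun k => n - k) (fun k => n - k) ?_ ?_ ?_ ?_ ?_ <;>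
      intro k hk <;> simp only [mem_Ioc] at hk ⊢
    any_goals omega
    rw [Nat.cast_sub (by omega), sub_sub_cancel, mul_comm]
  have hhalf : ∀ j ≤ m, ∑ k ∈ Ioc 0 j, (√(k * (n - k)))⁻¹ ≤ π / 2 := fun j hj =>
    sum_Ioc_inv_sqrt_mul_sub_le_pi_div_two (by exact_mod_cast (by omega : 2 * j ≤ n))
  rw [show Icc 1 (n - 1) = Ioc 0 (n - 1) from Icc_add_one_left_eq_Ioc 0 _,
    ← sum_Ioc_consecutive _ m.zero_le (by omega), hreflect]
  linarith [hhalf m le_rfl, hhalf (n - 1 - m) (by omega)]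

lemma pow_div_sqrt_mul_pow_div_sqrt_le {c : ℝ} (hc : 0 ≤ c) {i j : ℕ} (hi : 0 < i) (hj : 0 < j) :
    c ^ i / √((i : ℝ) + 1) * (c ^ j / √((j : ℝ) + 1)) ≤ c ^ (i + j) * (√(i * j))⁻¹ := by
  rw [div_mul_div_comm, ← pow_add, ← sqrt_mul (by positivity), div_eq_mul_inv]
  gcongr <;> linarith

theorem convolution_estimate_general (c : ℝ) (hc : 0 < c) (N : ℕ) (u v : ℕ → ℂ)
    (hu : ∀ μ : ℕ, 1 ≤ μ → μ ≤ N - 1 → ‖u μ‖ ≤ c ^ μ / Real.sqrt ((μ : ℝ) + 1))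
    (hv : ∀ μ : ℕ, 1 ≤ μ → μ ≤ N - 1 → ‖v μ‖ ≤ c ^ μ / Real.sqrt ((μ : ℝ) + 1)) :
    ∑ μ ∈ Finset.Icc 1 (N - 1), ‖u (N - μ)‖ * ‖v μ‖ ≤ Real.pi * c ^ N := by
  have hterm : ∀ μ ∈ Icc 1 (N - 1), ‖u (N - μ)‖ * ‖v μ‖ ≤ c ^ N * (√(μ * (N - μ)))⁻¹ := by
    intro μ hμ
    obtain ⟨hμ1, hμN⟩ := mem_Icc.mp hμ
    calc ‖u (N - μ)‖ * ‖v μ‖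
        ≤ c ^ (N - μ) / √(((N - μ : ℕ) : ℝ) + 1) * (c ^ μ / √((μ : ℝ) + 1)) :=
          mul_le_mul (hu _ (by omega) (by omega)) (hv μ hμ1 hμN) (norm_nonneg _) (by positivity)
      _ ≤ c ^ (N - μ + μ) * (√((N - μ : ℕ) * μ))⁻¹ :=
          pow_div_sqrt_mul_pow_div_sqrt_le hc.le (by omega) hμ1
      _ = c ^ N * (√(μ * (N - μ)))⁻¹ := by
          rw [Nat.sub_add_cancel (by omega), Nat.cast_sub (by omega), mul_comm (μ : ℝ)]
  calc ∑ μ ∈ Icc 1 (N - 1), ‖u (N - μ)‖ * ‖v μ‖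
      ≤ ∑ μ ∈ Icc 1 (N - 1), c ^ N * (√(μ * (N - μ)))⁻¹ := sum_le_sum hterm
    _ = c ^ N * ∑ μ ∈ Icc 1 (N - 1), (√(μ * (N - μ)))⁻¹ := (mul_sum _ _ _).symm
    _ ≤ c ^ N * π := by gcongr; exact sum_Icc_inv_sqrt_mul_sub_le_pi N
    _ = π * c ^ N := mul_comm _ _

/-- Convolution estimate underlying (2.24)–(2.25) of the paper: if
`|u_μ| ≤ c^μ/√(μ+1)` and `|v_μ| ≤ c^μ/√(μ+1)` for `1 ≤ μ ≤ N−1`, then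
`∑_{μ=1}^{N−1} |u_{N−μ}|·|v_μ| ≤ π c^N`. -/
theorem convolution_estimate (c : ℝ) (hc : 0 < c) (N : ℕ) (hN : 2 ≤ N) (u v : ℕ → ℂ)
    (hu : ∀ μ : ℕ, 1 ≤ μ → μ ≤ N - 1 → ‖u μ‖ ≤ c ^ μ / Real.sqrt ((μ : ℝ) + 1))
    (hv : ∀ μ : ℕ, 1 ≤ μ → μ ≤ N - 1 → ‖v μ‖ ≤ c ^ μ / Real.sqrt ((μ : ℝ) + 1)) :
    ∑ μ ∈ Finset.Icc 1 (N - 1), ‖u (N - μ)‖ * ‖v μ‖ ≤ Real.pi * c ^ N :=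
  convolution_estimate_general c hc N u v hu hv
end

section
/- Let A, λ be real numbers, let K > 0 be real, let N ≥ 3 be an integer, and let (f_μ) and (h_μ) be complex numbers satisfying |f_μ| ≤ (2K)^μ/√(μ+1) and |h_μ| ≤ (2K)^μ/√(μ+1) for all integers μ with 1 ≤ μ ≤ N−1. Then | −A f_{N−2} − 2λ Σ_{μ=1}^{N−1} f_{N−μ} h_μ | ≤ ( |A| (2K)^{−2}/√(N−1) + 2|λ|π ) (2K)^N. -/
open Real Finset

lemma le_arcsin_of_nonneg {z : ℝ} (h0 : 0 ≤ z) (h1 : z ≤ 1) : z ≤ Real.arcsin z := by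
  nth_rewrite 1 [← Real.sin_arcsin (by linarith) h1]
  exact Real.sin_le (Real.arcsin_nonneg.mpr h0)

lemma arcsin_le_pi_div_four {x : ℝ} (h0 : 0 ≤ x) (h : x ^ 2 ≤ 1 / 2) :
    Real.arcsin x ≤ π / 4 := by
  have h2 : Real.sqrt 2 ^ 2 = 2 := Real.sq_sqrt (by norm_num)
  have hs2 : (0:ℝ) ≤ Real.sqrt 2 := Real.sqrt_nonneg 2
  have hx : x ≤ Real.sin (π / 4) := by
    rw [Real.sin_pi_div_four]; nlinarith
  calc Real.arcsin x ≤ Real.arcsin (Real.sin (π/4)) := Real.monotone_arcsin hx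
    _ = π / 4 := Real.arcsin_sin (by linarith [Real.pi_pos]) (by linarith [Real.pi_pos])

set_option maxHeartbeats 1000000 in
lemma arcsinDiff {x y : ℝ} (hx : 0 ≤ x) (hxy : x ≤ y) (hy : y ^ 2 ≤ 1 / 2) :
    y * Real.sqrt (1 - x ^ 2) - x * Real.sqrt (1 - y ^ 2) ≤
      Real.arcsin y - Real.arcsin x := by
  have hy0 : 0 ≤ y := le_trans hx hxy
  have hy1 : y ≤ 1 := by nlinarith
  have hx1 : x ≤ 1 := le_trans hxy hy1
  have hx2 : x ^ 2 ≤ 1 / 2 := by nlinarith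
  set u := Real.sqrt (1 - x ^ 2) with hu
  set v := Real.sqrt (1 - y ^ 2) with hv
  have hu0 : 0 ≤ u := Real.sqrt_nonneg _
  have hv0 : 0 ≤ v := Real.sqrt_nonneg _
  have hu2 : u ^ 2 = 1 - x ^ 2 := Real.sq_sqrt (by nlinarith)
  have hv2 : v ^ 2 = 1 - y ^ 2 := Real.sq_sqrt (by nlinarith)
  set z := y * u - x * v with hz
  have hvu : v ≤ u := by
    have : v ^ 2 ≤ u ^ 2 := by nlinarith
    nlinarith
  have hz0 : 0 ≤ z := by nlinarith
  have hu1 : u ≤ 1 := by nlinarith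
  have hzy : z ≤ y := by nlinarith [mul_nonneg hx hv0]
  have hz1 : z ≤ 1 := le_trans hzy hy1
  -- √(1 - z²) = x*y + u*v
  have hzsq : Real.sqrt (1 - z ^ 2) = x * y + u * v := by
    rw [show 1 - z ^ 2 = (x * y + u * v) ^ 2 by
      rw [hz]; linear_combination (-(y ^ 2) - v ^ 2) * hu2 - hv2]
    exact Real.sqrt_sq (by positivity)
  -- sin (arcsin x + arcsin z) = y
  have hsin : Real.sin (Real.arcsin x + Real.arcsin z) = y := by
    rw [Real.sin_add, Real.sin_arcsin (by linarith) hx1, Real.sin_arcsin (by linarith) hz1,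
      Real.cos_arcsin, Real.cos_arcsin, hzsq, ← hu]
    linear_combination y * hu2
  have hax : Real.arcsin x ≤ π / 4 := arcsin_le_pi_div_four hx hx2
  have haz : Real.arcsin z ≤ π / 4 := arcsin_le_pi_div_four hz0 (by nlinarith)
  have hax0 : 0 ≤ Real.arcsin x := Real.arcsin_nonneg.mpr hx
  have haz0 : 0 ≤ Real.arcsin z := Real.arcsin_nonneg.mpr hz0
  have key : Real.arcsin x + Real.arcsin z = Real.arcsin y := by
    apply Real.injOn_sin (Set.mem_Icc.mpr ⟨by linarith [Real.pi_pos], by linarith [Real.pi_pos]⟩)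
      (Set.mem_Icc.mpr ⟨Real.neg_pi_div_two_le_arcsin y, Real.arcsin_le_pi_div_two y⟩)
    rw [hsin, Real.sin_arcsin (by linarith) hy1]
  have := le_arcsin_of_nonneg hz0 hz1
  linarith

lemma algUV {a u v : ℝ} (hu : 0 ≤ u) (hv : 0 ≤ v) (hu2 : u ^ 2 = a) (hv2 : v ^ 2 = a - 1)
    (ha : 1 ≤ a) : u * v ≤ a - 1 / 2 := by
  have h : (u * v) ^ 2 = a * (a - 1) := by rw [mul_pow, hu2, hv2]
  nlinarith [mul_nonneg hu hv]

lemma algKey {a M u v w w1 : ℝ} (ha : 2 ≤ a) (haM : 2 * a ≤ M)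
    (hu : 0 ≤ u) (hv : 0 ≤ v) (hw : 0 ≤ w) (hw1 : 0 ≤ w1)
    (hu2 : u ^ 2 = a) (hv2 : v ^ 2 = a - 1) (hw2 : w ^ 2 = M - a) (hw12 : w1 ^ 2 = M - a + 1) :
    u * w1 + v * w ≤ 2 * (u * w) := by
  have huv : u * v ≤ a - 1 / 2 := algUV hu hv hu2 hv2 (by linarith)
  have h4 : u * v * w ^ 2 ≤ (a - 1 / 2) * (M - a) := by
    have hw2n : (0:ℝ) ≤ w ^ 2 := sq_nonneg w
    nlinarith [mul_le_mul_of_nonneg_right huv hw2n]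
  have A1 : u ^ 2 * w ^ 2 = a * (M - a) := by rw [hu2, hw2]
  have A2 : v ^ 2 * w ^ 2 = (a - 1) * (M - a) := by rw [hv2, hw2]
  have A3 : (u * w1) ^ 2 = a * (M - a + 1) := by rw [mul_pow, hu2, hw12]
  have pos : 0 ≤ 2 * (u * w) - v * w := by
    have hvu : v ≤ u := by nlinarith
    nlinarith [mul_nonneg hv hw, mul_nonneg hu hw]
  have sq : (u * w1) ^ 2 ≤ (2 * (u * w) - v * w) ^ 2 := by nlinarith [h4, A1, A2, A3]
  nlinarith [sq, pos, mul_nonneg hu hw1]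

set_option maxHeartbeats 1000000 in
lemma perTerm {a M : ℝ} (ha : 2 ≤ a) (haM : 2 * a ≤ M) :
    1 / Real.sqrt (a * (M - a)) ≤
      2 * (Real.arcsin (Real.sqrt (a / M)) - Real.arcsin (Real.sqrt ((a - 1) / M))) := by
  have hM0 : 0 < M := by linarith
  set x := Real.sqrt ((a - 1) / M) with hxdef
  set y := Real.sqrt (a / M) with hydef
  have hx0 : 0 ≤ x := Real.sqrt_nonneg _
  have hxy : x ≤ y := Real.sqrt_le_sqrt (by gcongr <;> linarith)
  have hx2 : x ^ 2 = (a - 1) / M := Real.sq_sqrt (by apply div_nonneg <;> linarith)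
  have hy2 : y ^ 2 = a / M := Real.sq_sqrt (by apply div_nonneg <;> linarith)
  have hyhalf : y ^ 2 ≤ 1 / 2 := by rw [hy2, div_le_iff₀ hM0]; linarith
  have main := arcsinDiff hx0 hxy hyhalf
  set u := Real.sqrt a with hudef
  set v := Real.sqrt (a - 1) with hvdef
  set w := Real.sqrt (M - a) with hwdef
  set w1 := Real.sqrt (M - a + 1) with hw1def
  set s := Real.sqrt M with hsdef
  have hu2 : u ^ 2 = a := Real.sq_sqrt (by linarith)
  have hv2 : v ^ 2 = a - 1 := Real.sq_sqrt (by linarith)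
  have hw2 : w ^ 2 = M - a := Real.sq_sqrt (by linarith)
  have hw12 : w1 ^ 2 = M - a + 1 := Real.sq_sqrt (by linarith)
  have hs2 : s ^ 2 = M := Real.sq_sqrt (by linarith)
  have hu0 : 0 < u := Real.sqrt_pos.mpr (by linarith)
  have hv0 : 0 ≤ v := Real.sqrt_nonneg _
  have hw0 : 0 < w := Real.sqrt_pos.mpr (by linarith)
  have hw10 : 0 < w1 := Real.sqrt_pos.mpr (by linarith)
  have hs0 : 0 < s := Real.sqrt_pos.mpr hM0
  have e1 : Real.sqrt (1 - x ^ 2) = w1 / s := by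
    rw [hx2, show 1 - (a - 1) / M = (M - a + 1) / M by field_simp; ring,
      Real.sqrt_div (by linarith)]
  have e2 : Real.sqrt (1 - y ^ 2) = w / s := by
    rw [hy2, show 1 - a / M = (M - a) / M by field_simp,
      Real.sqrt_div (by linarith)]
  have ey : y = u / s := by rw [hydef, Real.sqrt_div (by linarith)]
  have ex : x = v / s := by rw [hxdef, Real.sqrt_div (by linarith)]
  have hzval : y * Real.sqrt (1 - x ^ 2) - x * Real.sqrt (1 - y ^ 2)
      = (u * w1 - v * w) / M := by
    rw [e1, e2, ey, ex, div_mul_div_comm, div_mul_div_comm, div_sub_div_same,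
      show s * s = M from by rw [← hs2]; ring]
  have key1 : u * w1 + v * w ≤ 2 * (u * w) :=
    algKey ha haM hu0.le hv0 hw0.le hw10.le hu2 hv2 hw2 hw12
  have diffM : (u * w1 - v * w) * (u * w1 + v * w) = M := by
    have h : (u * w1) ^ 2 - (v * w) ^ 2 = M := by
      rw [mul_pow, mul_pow, hu2, hw12, hv2, hw2]; ring
    linear_combination h
  have hpq : 0 < u * w1 + v * w := by positivity
  have hd0 : 0 < u * w1 - v * w := by
    rcases lt_trichotomy (u * w1 - v * w) 0 with hlt | heq | hgt
    · nlinarith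
    · rw [heq, zero_mul] at diffM; linarith
    · exact hgt
  have step : 1 / (u * w) ≤ 2 * ((u * w1 - v * w) / M) := by
    have hM_le : 1 * M ≤ (2 * (u * w1 - v * w)) * (u * w) := by
      nlinarith [mul_le_mul_of_nonneg_left key1 hd0.le]
    have h2 := (div_le_div_iff₀ (mul_pos hu0 hw0) hM0).mpr hM_le
    rw [mul_div_assoc] at h2
    exact h2
  have egoal : Real.sqrt (a * (M - a)) = u * w := Real.sqrt_mul (by linarith) _
  rw [egoal]
  calc 1 / (u * w) ≤ 2 * ((u * w1 - v * w) / M) := step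
    _ ≤ 2 * (Real.arcsin y - Real.arcsin x) := by rw [← hzval]; linarith [main]

lemma tel (M : ℕ) : ∀ m : ℕ, 1 ≤ m → 2 * m ≤ M →
    ∑ a ∈ Finset.Icc 2 m, 1 / Real.sqrt ((a : ℝ) * ((M : ℝ) - a)) ≤
      2 * (Real.arcsin (Real.sqrt ((m : ℝ) / M)) - Real.arcsin (Real.sqrt (1 / M))) := by
  intro m
  induction m with
  | zero => omega
  | succ n ih =>
    intro _ hM
    rcases Nat.eq_or_lt_of_le (show 1 ≤ n + 1 by omega) with h1 | h1
    · -- n = 0, m = 1 : empty sum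
      have hn : n = 0 := by omega
      subst hn
      simp only [show Finset.Icc 2 1 = (∅ : Finset ℕ) by rfl, Finset.sum_empty]
      have : Real.arcsin (Real.sqrt (1 / M)) ≤ Real.arcsin (Real.sqrt ((1:ℕ) / M)) := by norm_num
      linarith
    · have hn1 : 1 ≤ n := by omega
      have hMn : 2 * n ≤ M := by omega
      have IH := ih hn1 hMn
      rw [Finset.sum_Icc_succ_top (by omega : 2 ≤ n + 1)]
      have hstep : 1 / Real.sqrt (((n:ℝ) + 1) * ((M : ℝ) - ((n:ℝ)+1))) ≤
          2 * (Real.arcsin (Real.sqrt (((n:ℝ)+1) / M)) -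
            Real.arcsin (Real.sqrt (((n:ℝ)+1-1) / M))) := by
        apply perTerm
        · push_cast
          have : (1:ℝ) ≤ (n:ℝ) := by exact_mod_cast hn1
          linarith
        · push_cast at hM ⊢
          have : ((2 * (n+1) : ℕ) : ℝ) ≤ (M:ℝ) := Nat.cast_le.mpr hM
          push_cast at this; linarith
      push_cast
      push_cast at IH hstep
      have harc : Real.arcsin (Real.sqrt (((n:ℝ)+1-1) / M)) = Real.arcsin (Real.sqrt ((n:ℝ) / M)) := by
        norm_num
      rw [harc] at hstep
      linarith

lemma half_sum (M : ℕ) (m : ℕ) (hm : 2 * m ≤ M) (hM : 2 ≤ M) :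
    ∑ a ∈ Finset.Icc 2 m, 1 / Real.sqrt ((a : ℝ) * ((M : ℝ) - a)) ≤ π / 2 := by
  rcases Nat.lt_or_ge m 1 with h | h
  · interval_cases m
    simp [Real.pi_nonneg]
    positivity
  · have := tel M m h hm
    have hM0 : (0:ℝ) < M := by positivity
    have h1 : 0 ≤ Real.arcsin (Real.sqrt (1 / M)) :=
      Real.arcsin_nonneg.mpr (Real.sqrt_nonneg _)
    have h2 : Real.arcsin (Real.sqrt ((m : ℝ) / M)) ≤ π / 4 := by
      apply arcsin_le_pi_div_four (Real.sqrt_nonneg _)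
      rw [Real.sq_sqrt (by positivity)]
      rw [div_le_iff₀ hM0]
      have : ((2 * m : ℕ) : ℝ) ≤ (M:ℝ) := Nat.cast_le.mpr hm
      push_cast at this; linarith
    linarith

lemma sum_bound (M : ℕ) (hM : 5 ≤ M) :
    ∑ a ∈ Finset.Icc 2 (M - 2), 1 / Real.sqrt ((a : ℝ) * ((M : ℝ) - a)) ≤ π := by
  set m := M / 2 with hmdef
  have hm2 : 2 * m ≤ M := by omega
  have hmM : m ≤ M - 2 := by omega
  -- split the sum
  have hsplit : ∑ a ∈ Finset.Icc 2 (M - 2), 1 / Real.sqrt ((a : ℝ) * ((M : ℝ) - a)) =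
      (∑ a ∈ Finset.Icc 2 m, 1 / Real.sqrt ((a : ℝ) * ((M : ℝ) - a))) +
      ∑ a ∈ Finset.Icc (m + 1) (M - 2), 1 / Real.sqrt ((a : ℝ) * ((M : ℝ) - a)) := by
    rw [show Finset.Icc 2 (M-2) = Finset.Ioc 1 (M-2) from Finset.Icc_add_one_left_eq_Ioc 1 (M-2),
      show Finset.Icc 2 m = Finset.Ioc 1 m from Finset.Icc_add_one_left_eq_Ioc 1 m,
      show Finset.Icc (m+1) (M-2) = Finset.Ioc m (M-2) from Finset.Icc_add_one_left_eq_Ioc m (M-2)]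
    exact (Finset.sum_Ioc_consecutive _ (by omega) (by omega)).symm
  rw [hsplit]
  have h1 : ∑ a ∈ Finset.Icc 2 m, 1 / Real.sqrt ((a : ℝ) * ((M : ℝ) - a)) ≤ π / 2 :=
    half_sum M m hm2 (by omega)
  have h2 : ∑ a ∈ Finset.Icc (m + 1) (M - 2), 1 / Real.sqrt ((a : ℝ) * ((M : ℝ) - a)) ≤ π / 2 := by
    have hre : ∑ a ∈ Finset.Icc (m + 1) (M - 2), 1 / Real.sqrt ((a : ℝ) * ((M : ℝ) - a)) =
        ∑ b ∈ Finset.Icc 2 (M - m - 1), 1 / Real.sqrt ((b : ℝ) * ((M : ℝ) - b)) := by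
      apply Finset.sum_nbij' (fun a => M - a) (fun b => M - b)
      · intro a ha
        simp only [Finset.mem_Icc] at ha ⊢
        omega
      · intro b hb
        simp only [Finset.mem_Icc] at hb ⊢
        omega
      · intro a ha
        simp only [Finset.mem_Icc] at ha
        omega
      · intro b hb
        simp only [Finset.mem_Icc] at hb
        omega
      · intro a ha
        simp only [Finset.mem_Icc] at ha
        have hc : ((M - a : ℕ) : ℝ) = (M : ℝ) - a := by
          push_cast [Nat.cast_sub (by omega : a ≤ M)]; ring
        rw [hc]
        ring_nf
    rw [hre]
    exact half_sum M (M - m - 1) (by omega) (by omega)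
  linarith

/-- Estimate (2.24) of the paper: under the inductive hypothesis
`|f_μ|, |h_μ| ≤ (2K)^μ/√(μ+1)` for `1 ≤ μ ≤ N−1`,
`|−A f_{N−2} − 2λ ∑_{μ=1}^{N−1} f_{N−μ} h_μ| ≤ (|A|(2K)^{−2}/√(N−1) + 2|λ|π)(2K)^N`. -/
theorem estimate_2_24 (A lam K : ℝ) (hK : 0 < K) (N : ℕ) (hN : 3 ≤ N) (f h : ℕ → ℂ)
    (hf : ∀ μ : ℕ, 1 ≤ μ → μ ≤ N - 1 → ‖f μ‖ ≤ (2 * K) ^ μ / Real.sqrt ((μ : ℝ) + 1))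
    (hh : ∀ μ : ℕ, 1 ≤ μ → μ ≤ N - 1 → ‖h μ‖ ≤ (2 * K) ^ μ / Real.sqrt ((μ : ℝ) + 1)) :
    ‖-(A : ℂ) * f (N - 2) - 2 * (lam : ℂ) * ∑ μ ∈ Finset.Icc 1 (N - 1), f (N - μ) * h μ‖ ≤
      (|A| * (2 * K) ^ (-2 : ℤ) / Real.sqrt ((N : ℝ) - 1) + 2 * |lam| * Real.pi) *
        (2 * K) ^ N := by
  set C := 2 * K with hCdef
  have hC0 : 0 < C := by positivity
  set S := ∑ μ ∈ Finset.Icc 1 (N - 1), f (N - μ) * h μ with hSdef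
  -- Step 1 : triangle inequality
  have hsplit : ‖-(A : ℂ) * f (N - 2) - 2 * (lam : ℂ) * S‖ ≤
      |A| * ‖f (N - 2)‖ + 2 * |lam| * ‖S‖ := by
    calc ‖-(A : ℂ) * f (N - 2) - 2 * (lam : ℂ) * S‖
        ≤ ‖-(A : ℂ) * f (N - 2)‖ + ‖2 * (lam : ℂ) * S‖ := norm_sub_le _ _
      _ = |A| * ‖f (N - 2)‖ + 2 * |lam| * ‖S‖ := by
          simp [norm_mul, Complex.norm_real, Real.norm_eq_abs]
  -- Step 2 : bound on f (N-2)
  have hcast2 : ((N - 2 : ℕ) : ℝ) + 1 = (N : ℝ) - 1 := by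
    rw [Nat.cast_sub (by omega)]; ring
  have hf2 : ‖f (N - 2)‖ ≤ C ^ (N - 2) / Real.sqrt ((N : ℝ) - 1) := by
    have := hf (N - 2) (by omega) (by omega)
    rwa [hcast2] at this
  -- Step 3 : bound on the sum
  have hterm : ∀ μ ∈ Finset.Icc 1 (N - 1), ‖f (N - μ) * h μ‖ ≤
      C ^ N * (1 / (Real.sqrt (((N - μ : ℕ) : ℝ) + 1) * Real.sqrt ((μ : ℝ) + 1))) := by
    intro μ hμ
    simp only [Finset.mem_Icc] at hμ
    have h1 := hf (N - μ) (by omega) (by omega)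
    have h2 := hh μ (by omega) (by omega)
    rw [norm_mul]
    calc ‖f (N - μ)‖ * ‖h μ‖
        ≤ (C ^ (N - μ) / Real.sqrt (((N - μ : ℕ) : ℝ) + 1)) *
          (C ^ μ / Real.sqrt (((μ : ℕ) : ℝ) + 1)) := by
          apply mul_le_mul h1 h2 (norm_nonneg _)
          positivity
      _ = C ^ N * (1 / (Real.sqrt (((N - μ : ℕ) : ℝ) + 1) * Real.sqrt ((μ : ℝ) + 1))) := by
          rw [div_mul_div_comm, ← pow_add, show N - μ + μ = N by omega]
          ring
  have hS1 : ‖S‖ ≤ C ^ N *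
      ∑ μ ∈ Finset.Icc 1 (N - 1), 1 / (Real.sqrt (((N - μ : ℕ) : ℝ) + 1) * Real.sqrt ((μ : ℝ) + 1)) := by
    rw [Finset.mul_sum]
    exact (norm_sum_le _ _).trans (Finset.sum_le_sum hterm)
  -- reindex the sum : a = μ + 1, M = N + 2
  have hre : ∑ μ ∈ Finset.Icc 1 (N - 1), 1 / (Real.sqrt (((N - μ : ℕ) : ℝ) + 1) * Real.sqrt ((μ : ℝ) + 1)) =
      ∑ a ∈ Finset.Icc 2 ((N + 2) - 2), 1 / Real.sqrt ((a : ℝ) * (((N + 2 : ℕ) : ℝ) - a)) := by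
    apply Finset.sum_nbij' (fun μ => μ + 1) (fun a => a - 1)
    · intro μ hμ; simp only [Finset.mem_Icc] at hμ ⊢; omega
    · intro a ha; simp only [Finset.mem_Icc] at ha ⊢; omega
    · intro μ hμ; simp only [Finset.mem_Icc] at hμ; omega
    · intro a ha; simp only [Finset.mem_Icc] at ha; omega
    · intro μ hμ
      simp only [Finset.mem_Icc] at hμ
      have hc1 : ((N - μ : ℕ) : ℝ) = (N : ℝ) - μ := by
        rw [Nat.cast_sub (by omega)]
      have hc2 : (((μ + 1 : ℕ)) : ℝ) = (μ : ℝ) + 1 := by push_cast; ring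
      rw [hc1, hc2, Real.sqrt_mul (by positivity), mul_comm (Real.sqrt ((μ:ℝ)+1))]
      congr 3
      push_cast; ring
  have hT : ∑ μ ∈ Finset.Icc 1 (N - 1), 1 / (Real.sqrt (((N - μ : ℕ) : ℝ) + 1) * Real.sqrt ((μ : ℝ) + 1)) ≤ π := by
    rw [hre]
    exact sum_bound (N + 2) (by omega)
  have hS : ‖S‖ ≤ C ^ N * π := by
    refine hS1.trans ?_
    have : (0:ℝ) ≤ C ^ N := by positivity
    exact mul_le_mul_of_nonneg_left hT this
  -- Step 4 : assemble
  have hpow : C ^ (N - 2 : ℕ) = C ^ (-2 : ℤ) * C ^ N := by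
    rw [← zpow_natCast C (N - 2), show ((N - 2 : ℕ) : ℤ) = -2 + (N : ℤ) by omega,
      zpow_add₀ hC0.ne', zpow_natCast]
  have hsqrtpos : 0 < Real.sqrt ((N : ℝ) - 1) := by
    apply Real.sqrt_pos.mpr
    have : (3:ℝ) ≤ (N:ℝ) := by exact_mod_cast hN
    linarith
  calc ‖-(A : ℂ) * f (N - 2) - 2 * (lam : ℂ) * S‖
      ≤ |A| * ‖f (N - 2)‖ + 2 * |lam| * ‖S‖ := hsplit
    _ ≤ |A| * (C ^ (N - 2) / Real.sqrt ((N : ℝ) - 1)) + 2 * |lam| * (C ^ N * π) := by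
        gcongr
    _ = (|A| * C ^ (-2 : ℤ) / Real.sqrt ((N : ℝ) - 1) + 2 * |lam| * π) * C ^ N := by
        rw [hpow]; field_simp
end

section
/- Let A, B, λ be real numbers, let K ≥ 1/2 be real, let N ≥ 3 be an integer, and let (f_μ) and (h_μ) be complex numbers satisfying |f_μ| ≤ (2K)^μ/√(μ+1) and |h_μ| ≤ (2K)^μ/√(μ+1) for all integers μ with 1 ≤ μ ≤ N−1. Define G_N = −A f_{N−2} − 2λ Σ_{μ=1}^{N−1} f_{N−μ} h_μ and K_N = −B h_{N−2} − λ Σ_{μ=1}^{N−1} f_{N−μ} f_μ + Σ_{μ=1}^{N−1} h_{N−μ} h_μ. Then max(|G_N|, |K_N|) ≤ E (2K)^N, where E = max( |A| + 2|λ|π, |B| + (|λ|+1)π ). -/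
open Real Finset

lemma arcsin_diff_ge {x y : ℝ} (hx : 0 ≤ x) (hxy : x < y) (hy : y ≤ 1) :
    (y - x) / Real.sqrt (1 - x ^ 2) ≤ Real.arcsin y - Real.arcsin x := by
  obtain ⟨c, hc, hc'⟩ := exists_hasDerivAt_eq_slope Real.arcsin
      (fun t => 1 / Real.sqrt (1 - t ^ 2)) hxy
      (Real.continuous_arcsin.continuousOn)
      (fun t ht => Real.hasDerivAt_arcsin
        (ne_of_gt (by nlinarith [ht.1] : (-1:ℝ) < t))
        (ne_of_lt (lt_of_lt_of_le ht.2 hy)))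
  have hc0 : 0 ≤ c := le_of_lt (lt_of_le_of_lt hx hc.1)
  have hc1 : c < 1 := lt_of_lt_of_le hc.2 hy
  have h1c : 0 < 1 - c ^ 2 := by nlinarith
  have h1x : 0 < 1 - x ^ 2 := by nlinarith [lt_of_lt_of_le hxy hy]
  have hsq : Real.sqrt (1 - c ^ 2) ≤ Real.sqrt (1 - x ^ 2) := by
    apply Real.sqrt_le_sqrt; nlinarith [hc.1]
  have hsc : 0 < Real.sqrt (1 - c ^ 2) := Real.sqrt_pos.mpr h1c
  have hsx : 0 < Real.sqrt (1 - x ^ 2) := Real.sqrt_pos.mpr h1x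
  have key : 1 / Real.sqrt (1 - x ^ 2) ≤ 1 / Real.sqrt (1 - c ^ 2) :=
    one_div_le_one_div_of_le hsc hsq
  have hyx : 0 < y - x := sub_pos.mpr hxy
  have heq : Real.arcsin y - Real.arcsin x = (y - x) * (1 / Real.sqrt (1 - c ^ 2)) := by
    have h2 := hc'
    rw [div_eq_div_iff hsc.ne' hyx.ne'] at h2
    field_simp
    linarith
  rw [heq, div_eq_mul_one_div]
  exact mul_le_mul_of_nonneg_left key hyx.le

lemma term_le_arcsin (n a : ℕ) (h1 : 1 ≤ a) (han : a ≤ n) :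
    1 / (Real.sqrt a * Real.sqrt ((n:ℝ) + 1 - a)) ≤
      2 * Real.arcsin (Real.sqrt ((a:ℝ) / n)) -
        2 * Real.arcsin (Real.sqrt (((a:ℝ) - 1) / n)) := by
  have ha1 : (1:ℝ) ≤ (a:ℝ) := by exact_mod_cast h1
  have hanr : (a:ℝ) ≤ n := by exact_mod_cast han
  have hn : (0:ℝ) < n := by linarith
  set sa := Real.sqrt (a:ℝ) with hsa_def
  set sc := Real.sqrt ((a:ℝ) - 1) with hsc_def
  set sb := Real.sqrt ((n:ℝ) + 1 - a) with hsb_def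
  set sn := Real.sqrt (n:ℝ) with hsn_def
  have hsa : 0 < sa := Real.sqrt_pos.mpr (by linarith)
  have hsc : 0 ≤ sc := Real.sqrt_nonneg _
  have hsb : 0 < sb := Real.sqrt_pos.mpr (by linarith)
  have hsn : 0 < sn := Real.sqrt_pos.mpr hn
  have sa2 : sa ^ 2 = (a:ℝ) := Real.sq_sqrt (by linarith)
  have sc2 : sc ^ 2 = (a:ℝ) - 1 := Real.sq_sqrt (by linarith)
  have sb2 : sb ^ 2 = (n:ℝ) + 1 - a := Real.sq_sqrt (by linarith)
  have sn2 : sn ^ 2 = (n:ℝ) := Real.sq_sqrt (by linarith)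
  have hx : Real.sqrt (((a:ℝ) - 1) / n) = sc / sn := Real.sqrt_div (by linarith) _
  have hy : Real.sqrt ((a:ℝ) / n) = sa / sn := Real.sqrt_div (by linarith) _
  have hscsa : sc < sa := Real.sqrt_lt_sqrt (by linarith) (by linarith)
  have hxy : sc / sn < sa / sn := by
    exact div_lt_div_of_pos_right hscsa hsn
  have hyle : sa / sn ≤ 1 := by
    rw [div_le_one hsn]
    exact Real.sqrt_le_sqrt hanr
  have key := arcsin_diff_ge (x := sc / sn) (y := sa / sn) (by positivity) hxy hyle
  have h1x : 1 - (sc / sn) ^ 2 = (sb / sn) ^ 2 := by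
    rw [div_pow, div_pow, sc2, sb2, sn2]
    field_simp
    ring
  rw [h1x, Real.sqrt_sq (by positivity)] at key
  have hlhs : (sa / sn - sc / sn) / (sb / sn) = (sa - sc) / sb := by
    field_simp
  rw [hlhs] at key
  rw [hx, hy]
  have hB : 1 / (sa * sb) ≤ 2 * ((sa - sc) / sb) := by
    have h2 : 1 ≤ 2 * sa * (sa - sc) := by nlinarith [sq_nonneg (sa - sc)]
    have h3 : 2 * ((sa - sc) / sb) = (2 * sa * (sa - sc)) / (sa * sb) := by
      field_simp
    rw [h3]
    gcongr
  calc 1 / (sa * sb) ≤ 2 * ((sa - sc) / sb) := hB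
    _ ≤ 2 * (Real.arcsin (sa / sn) - Real.arcsin (sc / sn)) := by linarith
    _ = 2 * Real.arcsin (sa / sn) - 2 * Real.arcsin (sc / sn) := by ring

lemma sum_le_pi (n : ℕ) (hn : 1 ≤ n) :
    ∑ a ∈ Finset.Icc 1 n, 1 / (Real.sqrt a * Real.sqrt ((n:ℝ) + 1 - a)) ≤ Real.pi := by
  set g : ℕ → ℝ := fun a => 2 * Real.arcsin (Real.sqrt ((a:ℝ) / n)) with hg
  have hstep : ∀ a ∈ Finset.Icc 1 n,
      1 / (Real.sqrt a * Real.sqrt ((n:ℝ) + 1 - a)) ≤ g a - g (a - 1) := by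
    intro a ha
    rw [Finset.mem_Icc] at ha
    have h := term_le_arcsin n a ha.1 ha.2
    have hcast : ((a - 1 : ℕ) : ℝ) = (a:ℝ) - 1 := by
      have := ha.1
      push_cast [this]
      ring
    simp only [hg, hcast]
    exact h
  have htel : ∑ a ∈ Finset.Icc 1 n, (g a - g (a - 1)) = g n - g 0 := by
    rw [← Finset.Ico_add_one_right_eq_Icc, Finset.sum_Ico_eq_sum_range]
    have : ∀ i, g (1 + i) - g (1 + i - 1) = g (i + 1) - g i := by
      intro i
      congr 1
      · rw [Nat.add_comm]
      · congr 1
        omega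
    simp_rw [this]
    exact Finset.sum_range_sub g n
  have hgn : g n = Real.pi := by
    have hn0 : (n:ℝ) ≠ 0 := by positivity
    show 2 * Real.arcsin (Real.sqrt ((n:ℝ) / n)) = Real.pi
    rw [div_self hn0, Real.sqrt_one, Real.arcsin_one]
    ring
  have hg0 : g 0 = 0 := by simp [hg]
  calc ∑ a ∈ Finset.Icc 1 n, 1 / (Real.sqrt a * Real.sqrt ((n:ℝ) + 1 - a))
      ≤ ∑ a ∈ Finset.Icc 1 n, (g a - g (a - 1)) := Finset.sum_le_sum hstep
    _ = g n - g 0 := htel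
    _ = Real.pi := by rw [hgn, hg0]; ring

lemma inner_sum_le_pi (N : ℕ) (hN : 1 ≤ N) :
    ∑ μ ∈ Finset.Icc 1 (N - 1),
      1 / (Real.sqrt ((μ:ℝ) + 1) * Real.sqrt ((N:ℝ) - μ + 1)) ≤ Real.pi := by
  have key := sum_le_pi (N + 1) (by omega)
  refine le_trans ?_ key
  have hmap : ∑ μ ∈ Finset.Icc 1 (N - 1),
      1 / (Real.sqrt ((μ:ℝ) + 1) * Real.sqrt ((N:ℝ) - μ + 1)) =
      ∑ a ∈ Finset.Icc 2 N, 1 / (Real.sqrt (a:ℝ) * Real.sqrt (((N:ℕ)+1:ℝ) + 1 - a)) := by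
    rw [show Finset.Icc 2 N = (Finset.Icc 1 (N-1)).map (addRightEmbedding 1) by
      rw [Finset.map_add_right_Icc]; congr 1 <;> omega, Finset.sum_map]
    apply Finset.sum_congr rfl
    intro μ hμ
    simp only [addRightEmbedding_apply]
    push_cast
    ring_nf
  rw [hmap]
  push_cast
  apply Finset.sum_le_sum_of_subset_of_nonneg
  · apply Finset.Icc_subset_Icc <;> omega
  · intro a _ _
    positivity

/-- Estimate (2.26)–(2.27) of the paper: under the inductive hypothesis
`|f_μ|, |h_μ| ≤ (2K)^μ/√(μ+1)` for `1 ≤ μ ≤ N−1` (with `K ≥ 1/2`), the source terms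
`G_N = −A f_{N−2} − 2λ ∑ f_{N−μ} h_μ` and
`K_N = −B h_{N−2} − λ ∑ f_{N−μ} f_μ + ∑ h_{N−μ} h_μ` satisfy
`max(|G_N|, |K_N|) ≤ E (2K)^N` with `E = max(|A| + 2|λ|π, |B| + (|λ|+1)π)`. -/
theorem estimate_2_26 (A B lam K : ℝ) (hK : 1 / 2 ≤ K) (N : ℕ) (hN : 3 ≤ N) (f h : ℕ → ℂ)
    (hf : ∀ μ : ℕ, 1 ≤ μ → μ ≤ N - 1 → ‖f μ‖ ≤ (2 * K) ^ μ / Real.sqrt ((μ : ℝ) + 1))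
    (hh : ∀ μ : ℕ, 1 ≤ μ → μ ≤ N - 1 → ‖h μ‖ ≤ (2 * K) ^ μ / Real.sqrt ((μ : ℝ) + 1))
    (G KN : ℂ) (E : ℝ)
    (hG : G = -(A : ℂ) * f (N - 2) -
        2 * (lam : ℂ) * ∑ μ ∈ Finset.Icc 1 (N - 1), f (N - μ) * h μ)
    (hKN : KN = -(B : ℂ) * h (N - 2) -
        (lam : ℂ) * (∑ μ ∈ Finset.Icc 1 (N - 1), f (N - μ) * f μ) +
        ∑ μ ∈ Finset.Icc 1 (N - 1), h (N - μ) * h μ)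
    (hE : E = max (|A| + 2 * |lam| * Real.pi) (|B| + (|lam| + 1) * Real.pi)) :
    max ‖G‖ ‖KN‖ ≤ E * (2 * K) ^ N := by
  set c := 2 * K with hc
  have hc1 : (1:ℝ) ≤ c := by rw [hc]; linarith
  have hc0 : (0:ℝ) < c := lt_of_lt_of_le one_pos hc1
  have hcN : (0:ℝ) ≤ c ^ N := by positivity
  have hpi : (0:ℝ) < Real.pi := Real.pi_pos
  -- bound on the convolution sums
  have hsum : ∀ u v : ℕ → ℂ,
      (∀ μ : ℕ, 1 ≤ μ → μ ≤ N - 1 → ‖u μ‖ ≤ c ^ μ / Real.sqrt ((μ : ℝ) + 1)) →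
      (∀ μ : ℕ, 1 ≤ μ → μ ≤ N - 1 → ‖v μ‖ ≤ c ^ μ / Real.sqrt ((μ : ℝ) + 1)) →
      ‖∑ μ ∈ Finset.Icc 1 (N - 1), u (N - μ) * v μ‖ ≤ Real.pi * c ^ N := by
    intro u v hu hv
    calc ‖∑ μ ∈ Finset.Icc 1 (N - 1), u (N - μ) * v μ‖
        ≤ ∑ μ ∈ Finset.Icc 1 (N - 1), ‖u (N - μ) * v μ‖ := norm_sum_le _ _
      _ ≤ ∑ μ ∈ Finset.Icc 1 (N - 1),
            c ^ N * (1 / (Real.sqrt ((μ:ℝ) + 1) * Real.sqrt ((N:ℝ) - μ + 1))) := by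
          apply Finset.sum_le_sum
          intro μ hμ
          rw [Finset.mem_Icc] at hμ
          have hμ1 := hμ.1
          have hμ2 := hμ.2
          have h1 : 1 ≤ N - μ := by omega
          have h2 : N - μ ≤ N - 1 := by omega
          have hcast : ((N - μ : ℕ) : ℝ) = (N:ℝ) - μ := by
            have : μ ≤ N := by omega
            push_cast [this]
            ring
          have hbu := hu (N - μ) h1 h2
          have hbv := hv μ hμ1 hμ2
          rw [norm_mul]
          have hprod : ‖u (N - μ)‖ * ‖v μ‖ ≤
              (c ^ (N - μ) / Real.sqrt (((N - μ : ℕ) : ℝ) + 1)) *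
              (c ^ μ / Real.sqrt ((μ:ℝ) + 1)) :=
            mul_le_mul hbu hbv (norm_nonneg _) (by positivity)
          refine le_trans hprod (le_of_eq ?_)
          rw [hcast, div_mul_div_comm, ← pow_add, Nat.sub_add_cancel (by omega)]
          have hs1 : (0:ℝ) < Real.sqrt ((N:ℝ) - μ + 1) := by
            apply Real.sqrt_pos.mpr
            have : (μ:ℝ) ≤ (N:ℝ) := by exact_mod_cast (by omega : μ ≤ N)
            linarith
          have hs2 : (0:ℝ) < Real.sqrt ((μ:ℝ) + 1) := by positivity
          field_simp
      _ = c ^ N * ∑ μ ∈ Finset.Icc 1 (N - 1),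
            1 / (Real.sqrt ((μ:ℝ) + 1) * Real.sqrt ((N:ℝ) - μ + 1)) :=
          (Finset.mul_sum _ _ _).symm
      _ ≤ c ^ N * Real.pi :=
          mul_le_mul_of_nonneg_left (inner_sum_le_pi N (by omega)) hcN
      _ = Real.pi * c ^ N := mul_comm _ _
  -- bound on single terms
  have hsingle : ∀ w : ℕ → ℂ,
      (∀ μ : ℕ, 1 ≤ μ → μ ≤ N - 1 → ‖w μ‖ ≤ c ^ μ / Real.sqrt ((μ : ℝ) + 1)) →
      ‖w (N - 2)‖ ≤ c ^ N := by
    intro w hw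
    have hb := hw (N - 2) (by omega) (by omega)
    have h1 : c ^ (N - 2) / Real.sqrt (((N - 2 : ℕ) : ℝ) + 1) ≤ c ^ (N - 2) := by
      apply div_le_self (by positivity)
      rw [Real.one_le_sqrt]
      have := Nat.cast_nonneg (α := ℝ) (N - 2)
      linarith
    have h2 : c ^ (N - 2) ≤ c ^ N := pow_le_pow_right₀ hc1 (by omega)
    linarith
  have hGb : ‖G‖ ≤ E * c ^ N := by
    rw [hG]
    have hb1 := hsingle f hf
    have hb2 := hsum f h hf hh
    calc ‖-(A : ℂ) * f (N - 2) -
          2 * (lam : ℂ) * ∑ μ ∈ Finset.Icc 1 (N - 1), f (N - μ) * h μ‖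
        ≤ ‖-(A : ℂ) * f (N - 2)‖ +
          ‖2 * (lam : ℂ) * ∑ μ ∈ Finset.Icc 1 (N - 1), f (N - μ) * h μ‖ := norm_sub_le _ _
      _ = |A| * ‖f (N - 2)‖ +
          2 * |lam| * ‖∑ μ ∈ Finset.Icc 1 (N - 1), f (N - μ) * h μ‖ := by
          simp [norm_mul, Complex.norm_real, Real.norm_eq_abs]
      _ ≤ |A| * c ^ N + 2 * |lam| * (Real.pi * c ^ N) := by
          have := mul_le_mul_of_nonneg_left hb1 (abs_nonneg A)
          have := mul_le_mul_of_nonneg_left hb2 (by positivity : (0:ℝ) ≤ 2 * |lam|)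
          linarith
      _ = (|A| + 2 * |lam| * Real.pi) * c ^ N := by ring
      _ ≤ E * c ^ N := by
          apply mul_le_mul_of_nonneg_right _ hcN
          rw [hE]
          exact le_max_left _ _
  have hKb : ‖KN‖ ≤ E * c ^ N := by
    rw [hKN]
    have hb1 := hsingle h hh
    have hb2 := hsum f f hf hf
    have hb3 := hsum h h hh hh
    calc ‖-(B : ℂ) * h (N - 2) -
          (lam : ℂ) * (∑ μ ∈ Finset.Icc 1 (N - 1), f (N - μ) * f μ) +
          ∑ μ ∈ Finset.Icc 1 (N - 1), h (N - μ) * h μ‖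
        ≤ ‖-(B : ℂ) * h (N - 2) -
            (lam : ℂ) * (∑ μ ∈ Finset.Icc 1 (N - 1), f (N - μ) * f μ)‖ +
          ‖∑ μ ∈ Finset.Icc 1 (N - 1), h (N - μ) * h μ‖ := norm_add_le _ _
      _ ≤ ‖-(B : ℂ) * h (N - 2)‖ +
          ‖(lam : ℂ) * (∑ μ ∈ Finset.Icc 1 (N - 1), f (N - μ) * f μ)‖ +
          ‖∑ μ ∈ Finset.Icc 1 (N - 1), h (N - μ) * h μ‖ := by
          have := norm_sub_le (-(B : ℂ) * h (N - 2))
            ((lam : ℂ) * (∑ μ ∈ Finset.Icc 1 (N - 1), f (N - μ) * f μ))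
          linarith
      _ = |B| * ‖h (N - 2)‖ +
          |lam| * ‖∑ μ ∈ Finset.Icc 1 (N - 1), f (N - μ) * f μ‖ +
          ‖∑ μ ∈ Finset.Icc 1 (N - 1), h (N - μ) * h μ‖ := by
          simp [norm_mul, Complex.norm_real, Real.norm_eq_abs]
      _ ≤ |B| * c ^ N + |lam| * (Real.pi * c ^ N) + Real.pi * c ^ N := by
          have := mul_le_mul_of_nonneg_left hb1 (abs_nonneg B)
          have := mul_le_mul_of_nonneg_left hb2 (abs_nonneg lam)
          linarith
      _ = (|B| + (|lam| + 1) * Real.pi) * c ^ N := by ring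
      _ ≤ E * c ^ N := by
          apply mul_le_mul_of_nonneg_right _ hcN
          rw [hE]
          exact le_max_right _ _
  exact max_le hGb hKb
end

section
/- Let λ, f_0, s be complex numbers with λ ≠ 0 and λ² f_0² = 9(1/λ + 2). Then the characteristic polynomial of the 4×4 complex matrix A(s) with rows (s−2, −1, 0, 0), (−6, s−3, 2λf_0, 0), (0, 0, s−2, −1), (2λf_0, 0, 6/λ, s−3) factors as det(X·I − A(s)) = (X − (s+1)) · (X − (s−6)) · ((X−s)² + 5(X−s) + 12 + 6/λ). -/
/-- Characteristic polynomial factorization for the matrix `A_γ` of (2.13)/(3.9) of the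
paper (with `s = γ`, resp. `s = γ/n`): if `λ² f₀² = 9(1/λ + 2)` then
`det(X·I − A(s)) = (X − (s+1))(X − (s−6))((X−s)² + 5(X−s) + 12 + 6/λ)`. -/
theorem charpoly_case_i (lam f0 s : ℂ) (hlam : lam ≠ 0)
    (hf0 : lam ^ 2 * f0 ^ 2 = 9 * (1 / lam + 2)) :
    ∀ X : ℂ,
      (X • (1 : Matrix (Fin 4) (Fin 4) ℂ) -
        !![s - 2, -1, 0, 0;
           -6, s - 3, 2 * lam * f0, 0;
           0, 0, s - 2, -1;
           2 * lam * f0, 0, 6 / lam, s - 3]).det =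
      (X - (s + 1)) * (X - (s - 6)) * ((X - s) ^ 2 + 5 * (X - s) + 12 + 6 / lam) := by
  intro X
  have h1 : (X • (1 : Matrix (Fin 4) (Fin 4) ℂ) -
        !![s - 2, -1, 0, 0;
           -6, s - 3, 2 * lam * f0, 0;
           0, 0, s - 2, -1;
           2 * lam * f0, 0, 6 / lam, s - 3]) =
      !![X - (s - 2), 1, 0, 0;
         6, X - (s - 3), -(2 * lam * f0), 0;
         0, 0, X - (s - 2), 1;
         -(2 * lam * f0), 0, -(6 / lam), X - (s - 3)] := by
    ext i j
    fin_cases i <;> fin_cases j <;>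
      simp [Matrix.one_apply, Matrix.vecHead, Matrix.vecTail]
  rw [h1]
  simp [Matrix.det_succ_row_zero, Fin.sum_univ_succ, Fin.succAbove, Matrix.vecHead, Matrix.vecTail]
  field_simp
  linear_combination (-4 * lam) * hf0 - 36 * mul_inv_cancel₀ hlam
end

section
/- Let λ, f_0, r, r̄, s be complex numbers with λ ≠ 0, λ² f_0² = 9(1/λ + 2), r + r̄ = 5 and r·r̄ = 12 + 6/λ. Let A(s) be the 4×4 complex matrix with rows (s−2, −1, 0, 0), (−6, s−3, 2λf_0, 0), (0, 0, s−2, −1), (2λf_0, 0, 6/λ, s−3); let P be the 4×4 matrix with rows (−λf_0, −λf_0, λf_0, λf_0), (3λf_0, −4λf_0, λf_0(r−2), λf_0(r̄−2)), (3, 3, 3(2+1/λ), 3(2+1/λ)), (−9, 12, 3(2+1/λ)(r−2), 3(2+1/λ)(r̄−2)); and let D(s) be the diagonal matrix with diagonal entries s+1, s−6, s−r, s−r̄. Then A(s)·P = P·D(s). -/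
/-!
`A(s) = s • 1 - K`, where `K` is the Kovalevskaya matrix of the balance, so it suffices that the
columns of `P` are eigenvectors of `K` for the resonances `-1, 6, r, r̄`. Row by row, each
eigen-equation reduces to the balance relation `λ² f₀² = 9(1/λ + 2)` and, for the last two
columns, to the resonance equation `ρ² - 5ρ + 12 + 6/λ = 0`, which `r` and `r̄` satisfy by Vieta.
-/

open Matrix

theorem Matrix.mul_transpose_eq_transpose_mul_diagonal {m n R : Type*} [Fintype m] [Fintype n]
    [DecidableEq m] [CommSemiring R] {A : Matrix n n R} {V : Matrix m n R} {d : m → R}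
    (h : ∀ j, A *ᵥ V j = d j • V j) : A * Vᵀ = Vᵀ * diagonal d := by
  ext i j
  rw [mul_diagonal, transpose_apply, mul_comm]
  exact congrFun (h j) i

theorem Matrix.smul_one_sub_mul_eq_mul_diagonal {n R : Type*} [Fintype n] [DecidableEq n]
    [CommRing R] {K P : Matrix n n R} {μ : n → R} (h : K * P = P * diagonal μ) (s : R) :
    (s • 1 - K) * P = P * diagonal (fun j => s - μ j) := by
  ext i j
  simp [sub_mul, h, mul_diagonal, mul_sub, mul_comm]

namespace HenonHeiles

variable {K : Type*} [Field K] {lam f0 : K}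

def kovalevskayaMatrix (lam f0 : K) : Matrix (Fin 4) (Fin 4) K :=
  !![2, 1, 0, 0; 6, 3, -(2 * lam * f0), 0; 0, 0, 2, 1; -(2 * lam * f0), 0, -(6 / lam), 3]

def resonanceEigenvector (lam f0 r : K) : Fin 4 → K :=
  ![lam * f0, lam * f0 * (r - 2), 3 * (2 + 1 / lam), 3 * (2 + 1 / lam) * (r - 2)]

theorem kovalevskayaMatrix_mulVec_eigenvector_neg_one
    (hf0 : lam ^ 2 * f0 ^ 2 = 9 * (1 / lam + 2)) :
    kovalevskayaMatrix lam f0 *ᵥ ![-(lam * f0), 3 * lam * f0, 3, -9] =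
      (-1 : K) • ![-(lam * f0), 3 * lam * f0, 3, -9] := by
  ext i
  fin_cases i <;> simp [kovalevskayaMatrix, mulVec, dotProduct, Fin.sum_univ_four]
  · ring
  · ring
  · norm_num
  · linear_combination 2 * hf0

theorem kovalevskayaMatrix_mulVec_eigenvector_six (hf0 : lam ^ 2 * f0 ^ 2 = 9 * (1 / lam + 2)) :
    kovalevskayaMatrix lam f0 *ᵥ ![-(lam * f0), -4 * lam * f0, 3, 12] =
      (6 : K) • ![-(lam * f0), -4 * lam * f0, 3, 12] := by
  ext i
  fin_cases i <;> simp [kovalevskayaMatrix, mulVec, dotProduct, Fin.sum_univ_four]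
  · ring
  · ring
  · norm_num
  · linear_combination 2 * hf0

theorem kovalevskayaMatrix_mulVec_resonanceEigenvector {r : K}
    (hf0 : lam ^ 2 * f0 ^ 2 = 9 * (1 / lam + 2)) (hr : r ^ 2 - 5 * r + (12 + 6 / lam) = 0) :
    kovalevskayaMatrix lam f0 *ᵥ resonanceEigenvector lam f0 r =
      r • resonanceEigenvector lam f0 r := by
  ext i
  fin_cases i <;>
    simp [kovalevskayaMatrix, resonanceEigenvector, mulVec, dotProduct, Fin.sum_univ_four]
  · ring
  · linear_combination -(lam * f0) * hr
  · ring
  · linear_combination -2 * hf0 - 3 * (2 + 1 / lam) * hr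

theorem kovalevskayaMatrix_mul_eigenvectors {r rbar : K}
    (hf0 : lam ^ 2 * f0 ^ 2 = 9 * (1 / lam + 2)) (hr : r ^ 2 - 5 * r + (12 + 6 / lam) = 0)
    (hrbar : rbar ^ 2 - 5 * rbar + (12 + 6 / lam) = 0) :
    let V : Matrix (Fin 4) (Fin 4) K := of ![![-(lam * f0), 3 * lam * f0, 3, -9],
      ![-(lam * f0), -4 * lam * f0, 3, 12], resonanceEigenvector lam f0 r,
      resonanceEigenvector lam f0 rbar]
    kovalevskayaMatrix lam f0 * Vᵀ = Vᵀ * diagonal ![-1, 6, r, rbar] :=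
  mul_transpose_eq_transpose_mul_diagonal fun j => by
    fin_cases j
    exacts [kovalevskayaMatrix_mulVec_eigenvector_neg_one hf0,
      kovalevskayaMatrix_mulVec_eigenvector_six hf0,
      kovalevskayaMatrix_mulVec_resonanceEigenvector hf0 hr,
      kovalevskayaMatrix_mulVec_resonanceEigenvector hf0 hrbar]

end HenonHeiles

open HenonHeiles in
theorem diagonalization_case_i_general (lam f0 r rbar s : ℂ)
    (hf0 : lam ^ 2 * f0 ^ 2 = 9 * (1 / lam + 2))
    (hsum : r + rbar = 5) (hprod : r * rbar = 12 + 6 / lam) :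
    (!![s - 2, -1, 0, 0;
        -6, s - 3, 2 * lam * f0, 0;
        0, 0, s - 2, -1;
        2 * lam * f0, 0, 6 / lam, s - 3] : Matrix (Fin 4) (Fin 4) ℂ) *
      !![-(lam * f0), -(lam * f0), lam * f0, lam * f0;
         3 * lam * f0, -4 * lam * f0, lam * f0 * (r - 2), lam * f0 * (rbar - 2);
         3, 3, 3 * (2 + 1 / lam), 3 * (2 + 1 / lam);
         -9, 12, 3 * (2 + 1 / lam) * (r - 2), 3 * (2 + 1 / lam) * (rbar - 2)] =
    !![-(lam * f0), -(lam * f0), lam * f0, lam * f0;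
       3 * lam * f0, -4 * lam * f0, lam * f0 * (r - 2), lam * f0 * (rbar - 2);
       3, 3, 3 * (2 + 1 / lam), 3 * (2 + 1 / lam);
       -9, 12, 3 * (2 + 1 / lam) * (r - 2), 3 * (2 + 1 / lam) * (rbar - 2)] *
      Matrix.diagonal ![s + 1, s - 6, s - r, s - rbar] := by
  have hr : r ^ 2 - 5 * r + (12 + 6 / lam) = 0 := by linear_combination r * hsum - hprod
  have hrbar : rbar ^ 2 - 5 * rbar + (12 + 6 / lam) = 0 := by
    linear_combination rbar * hsum - hprod
  convert smul_one_sub_mul_eq_mul_diagonal (kovalevskayaMatrix_mul_eigenvectors hf0 hr hrbar) s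
    using 2 <;> ext i j <;> fin_cases i <;> fin_cases j <;>
    simp [kovalevskayaMatrix, resonanceEigenvector, one_apply]

/-- Simultaneous diagonalization (2.14)–(2.15)/(3.10)–(3.11) of the paper: with
`λ² f₀² = 9(1/λ + 2)`, `r + r̄ = 5`, `r·r̄ = 12 + 6/λ`, the columns of `P` are
eigenvectors of `A(s)` for the eigenvalues `s+1, s−6, s−r, s−r̄`, i.e. `A(s)·P = P·D(s)`. -/
theorem diagonalization_case_i (lam f0 r rbar s : ℂ) (hlam : lam ≠ 0)
    (hf0 : lam ^ 2 * f0 ^ 2 = 9 * (1 / lam + 2))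
    (hsum : r + rbar = 5) (hprod : r * rbar = 12 + 6 / lam) :
    (!![s - 2, -1, 0, 0;
        -6, s - 3, 2 * lam * f0, 0;
        0, 0, s - 2, -1;
        2 * lam * f0, 0, 6 / lam, s - 3] : Matrix (Fin 4) (Fin 4) ℂ) *
      !![-(lam * f0), -(lam * f0), lam * f0, lam * f0;
         3 * lam * f0, -4 * lam * f0, lam * f0 * (r - 2), lam * f0 * (rbar - 2);
         3, 3, 3 * (2 + 1 / lam), 3 * (2 + 1 / lam);
         -9, 12, 3 * (2 + 1 / lam) * (r - 2), 3 * (2 + 1 / lam) * (rbar - 2)] =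
    !![-(lam * f0), -(lam * f0), lam * f0, lam * f0;
       3 * lam * f0, -4 * lam * f0, lam * f0 * (r - 2), lam * f0 * (rbar - 2);
       3, 3, 3 * (2 + 1 / lam), 3 * (2 + 1 / lam);
       -9, 12, 3 * (2 + 1 / lam) * (r - 2), 3 * (2 + 1 / lam) * (rbar - 2)] *
      Matrix.diagonal ![s + 1, s - 6, s - r, s - rbar] :=
  diagonalization_case_i_general lam f0 r rbar s hf0 hsum hprod
end

section
/- Let λ, f_0, ᾱ, s be complex numbers with λ ≠ 0 and ᾱ² − ᾱ + 12λ = 0. Let A(s) be the 4×4 complex matrix with rows (s+ᾱ, −1, 0, 0), (12λ, s+ᾱ−1, 2λf_0, 0), (0, 0, s−2, −1), (0, 0, −12, s−3); let P be the 4×4 matrix with rows (−(ᾱ/12)f_0, 1, −λf_0, 1), (λf_0, ᾱ, −λf_0(ᾱ+6), 1−ᾱ), (1, 0, 3(2ᾱ+5), 0), (−3, 0, 12(2ᾱ+5), 0); and let D(s) be the diagonal matrix with diagonal entries s+1, s, s−6, s−(1−2ᾱ). Then A(s)·P = P·D(s). -/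
/-- Diagonalization claim (4.13) of the paper for the case(ii) psi-series: with
`ᾱ² − ᾱ + 12λ = 0`, the columns of `P` are eigenvectors of `A(s)` for the eigenvalues
`s+1, s, s−6, s−(1−2ᾱ)`, i.e. `A(s)·P = P·D(s)`. -/
theorem diagonalization_case_ii (lam f0 alphabar s : ℂ) (hlam : lam ≠ 0)
    (halpha : alphabar ^ 2 - alphabar + 12 * lam = 0) :
    (!![s + alphabar, -1, 0, 0;
        12 * lam, s + alphabar - 1, 2 * lam * f0, 0;
        0, 0, s - 2, -1;
        0, 0, -12, s - 3] : Matrix (Fin 4) (Fin 4) ℂ) *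
      !![-(alphabar / 12) * f0, 1, -(lam * f0), 1;
         lam * f0, alphabar, -(lam * f0) * (alphabar + 6), 1 - alphabar;
         1, 0, 3 * (2 * alphabar + 5), 0;
         -3, 0, 12 * (2 * alphabar + 5), 0] =
    !![-(alphabar / 12) * f0, 1, -(lam * f0), 1;
       lam * f0, alphabar, -(lam * f0) * (alphabar + 6), 1 - alphabar;
       1, 0, 3 * (2 * alphabar + 5), 0;
       -3, 0, 12 * (2 * alphabar + 5), 0] *
      Matrix.diagonal ![s + 1, s, s - 6, s - (1 - 2 * alphabar)] := by
  have hl : lam = (alphabar - alphabar ^ 2) / 12 := by linear_combination halpha / 12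
  subst hl
  ext i j
  fin_cases i <;> fin_cases j <;>
    simp [Matrix.mul_apply, Fin.sum_univ_succ, Matrix.diagonal] <;> ring
end

section
/- Let r, r̄ be complex numbers with r + r̄ = 5, let τ > 0 be a real number, and define τ^c = exp(c·ln τ) for complex c. Let a : ℕ×ℕ×ℕ → ℂ be such that the family ((k,l,m) ↦ a_{klm} τ^{k−2+rl+r̄m}) is summable. Define, for i, j ∈ ℕ, the finite sums a_{ij} = Σ_{k+5l=i} a_{k,l+j,l} and ā_{ij} = Σ_{k+5m=i} a_{k,m,m+j}. Then the families ((i,j) ↦ a_{ij} τ^{i−2+jr}) over ℕ×ℕ and ((i,j) ↦ ā_{ij} τ^{i−2+jr̄}) over ℕ×(ℕ∖{0}) are summable, and Σ_{(k,l,m)∈ℕ³} a_{klm} τ^{k−2+rl+r̄m} = Σ_{(i,j)∈ℕ×ℕ} a_{ij} τ^{i−2+jr} + Σ_{(i,j)∈ℕ×(ℕ∖{0})} ā_{ij} τ^{i−2+jr̄}. -/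
/-!
Split `ℕ³` into the part `m ≤ l` and the part `l < m`. The first is in bijection with triples
`((i, j), m)` with `5 m ≤ i` via `(k, l, m) = (i - 5m, m + j, m)`, the second likewise with the roles
of `l` and `m` exchanged and `j ≠ 0`. Since `r + r̄ = 5`, the exponent `k - 2 + r l + r̄ m` equals
`i - 2 + r j` (resp. `i - 2 + r̄ j`) on the whole finite fibre over `(i, j)`, so summing the absolutely
convergent series over each fibre first yields the two doubly indexed series.
-/
theorem HasSum.sigma_fintype_of_equiv {α β δ : Type*} {γ : β → Type*} [AddCommMonoid α]
    [TopologicalSpace α] [ContinuousAdd α] [RegularSpace α] [∀ b, Fintype (γ b)]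
    {f : δ → α} {a : α} (h : HasSum f a) (e : (Σ b, γ b) ≃ δ) :
    HasSum (fun b => ∑ c, f (e ⟨b, c⟩)) a :=
  (e.hasSum_iff.2 h).sigma fun _ => hasSum_fintype _

namespace Resummation

def fiveMulLe (i : ℕ) : Finset ℕ := (Finset.range (i + 1)).filter (fun l => 5 * l ≤ i)

theorem mem_fiveMulLe {i m : ℕ} : m ∈ fiveMulLe i ↔ 5 * m ≤ i := by
  simp only [fiveMulLe, Finset.mem_filter, Finset.mem_range]
  omega

def mLeL : Set (ℕ × ℕ × ℕ) := {q | q.2.2 ≤ q.2.1}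

def sigmaFiveMulLeEquivMLeL : (Σ p : ℕ × ℕ, fiveMulLe p.1) ≃ mLeL where
  toFun x := ⟨(x.1.1 - 5 * x.2, x.2 + x.1.2, x.2), Nat.le_add_right _ _⟩
  invFun q := ⟨(q.1.1 + 5 * q.1.2.2, q.1.2.1 - q.1.2.2), q.1.2.2, mem_fiveMulLe.2 (by omega)⟩
  left_inv := by
    rintro ⟨⟨i, j⟩, m, hm⟩
    have := mem_fiveMulLe.1 hm
    exact Sigma.subtype_ext (by simp only [Prod.mk.injEq]; omega) rfl
  right_inv := by
    rintro ⟨⟨k, l, m⟩, h : m ≤ l⟩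
    ext <;> simp only <;> omega

def sigmaFiveMulLeEquivMLeLCompl :
    (Σ p : ℕ × {j : ℕ // j ≠ 0}, fiveMulLe p.1) ≃ ↥mLeLᶜ where
  toFun x := ⟨(x.1.1 - 5 * x.2, x.2, x.2 + x.1.2), by
    have := x.1.2.2
    simp only [mLeL, Set.mem_compl_iff, Set.mem_ofPred_eq]
    omega⟩
  invFun q := ⟨(q.1.1 + 5 * q.1.2.1, ⟨q.1.2.2 - q.1.2.1, by
      have : ¬ q.1.2.2 ≤ q.1.2.1 := q.2
      omega⟩), q.1.2.1, mem_fiveMulLe.2 (by omega)⟩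
  left_inv := by
    rintro ⟨⟨i, j, hj⟩, l, hl⟩
    have := mem_fiveMulLe.1 hl
    refine Sigma.subtype_ext ?_ rfl
    simp only [Prod.mk.injEq, Subtype.mk.injEq]
    omega
  right_inv := by
    rintro ⟨⟨k, l, m⟩, h : ¬ m ≤ l⟩
    ext <;> simp only <;> omega

variable {r rbar : ℂ} (L : ℂ) {a : ℕ × ℕ × ℕ → ℂ} {S : ℂ}

theorem hasSum_of_hasSum_mLeL (hr : r + rbar = 5) {A : ℕ → ℕ → ℂ}
    (hA : ∀ i j, A i j = ∑ l ∈ fiveMulLe i, a (i - 5 * l, l + j, l))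
    (h : HasSum (fun q : mLeL =>
      a q * Complex.exp (((q.1.1 : ℂ) - 2 + r * q.1.2.1 + rbar * q.1.2.2) * L)) S) :
    HasSum (fun p : ℕ × ℕ => A p.1 p.2 * Complex.exp (((p.1 : ℂ) - 2 + r * p.2) * L)) S := by
  refine (h.sigma_fintype_of_equiv sigmaFiveMulLeEquivMLeL).congr_fun fun ⟨i, j⟩ => ?_
  rw [hA, Finset.sum_mul, ← Finset.sum_coe_sort]
  refine Finset.sum_congr rfl fun ⟨m, hm⟩ _ => ?_
  simp only [sigmaFiveMulLeEquivMLeL, Equiv.coe_fn_mk]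
  congr 3
  rw [Nat.cast_sub (mem_fiveMulLe.1 hm)]
  push_cast
  linear_combination -(m : ℂ) * hr

theorem hasSum_of_hasSum_mLeLCompl (hr : r + rbar = 5) {Abar : ℕ → ℕ → ℂ}
    (hAbar : ∀ i j, Abar i j = ∑ m ∈ fiveMulLe i, a (i - 5 * m, m, m + j))
    (h : HasSum (fun q : ↥mLeLᶜ =>
      a q * Complex.exp (((q.1.1 : ℂ) - 2 + r * q.1.2.1 + rbar * q.1.2.2) * L)) S) :
    HasSum (fun p : ℕ × {j : ℕ // j ≠ 0} =>
      Abar p.1 p.2 * Complex.exp (((p.1 : ℂ) - 2 + rbar * (p.2 : ℕ)) * L)) S := by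
  refine (h.sigma_fintype_of_equiv sigmaFiveMulLeEquivMLeLCompl).congr_fun fun ⟨i, j⟩ => ?_
  rw [hAbar, Finset.sum_mul, ← Finset.sum_coe_sort]
  refine Finset.sum_congr rfl fun ⟨m, hm⟩ _ => ?_
  simp only [sigmaFiveMulLeEquivMLeLCompl, Equiv.coe_fn_mk]
  congr 3
  rw [Nat.cast_sub (mem_fiveMulLe.1 hm)]
  push_cast
  linear_combination -(m : ℂ) * hr

end Resummation

open Resummation in
theorem resummation_B_general (r rbar : ℂ) (hr : r + rbar = 5) (τ : ℝ)
    (a : ℕ × ℕ × ℕ → ℂ) (A Abar : ℕ → ℕ → ℂ)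
    (hA : ∀ i j : ℕ, A i j =
      ∑ l ∈ (Finset.range (i + 1)).filter (fun l => 5 * l ≤ i), a (i - 5 * l, l + j, l))
    (hAbar : ∀ i j : ℕ, Abar i j =
      ∑ m ∈ (Finset.range (i + 1)).filter (fun m => 5 * m ≤ i), a (i - 5 * m, m, m + j))
    (hsum : Summable (fun p : ℕ × ℕ × ℕ =>
      a p * Complex.exp (((p.1 : ℂ) - 2 + r * (p.2.1 : ℂ) + rbar * (p.2.2 : ℂ)) *
        (Real.log τ : ℂ)))) :
    Summable (fun p : ℕ × ℕ =>
        A p.1 p.2 * Complex.exp (((p.1 : ℂ) - 2 + r * (p.2 : ℂ)) * (Real.log τ : ℂ))) ∧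
    Summable (fun p : ℕ × {j : ℕ // j ≠ 0} =>
        Abar p.1 (p.2 : ℕ) *
          Complex.exp (((p.1 : ℂ) - 2 + rbar * ((p.2 : ℕ) : ℂ)) * (Real.log τ : ℂ))) ∧
    ∑' p : ℕ × ℕ × ℕ,
        a p * Complex.exp (((p.1 : ℂ) - 2 + r * (p.2.1 : ℂ) + rbar * (p.2.2 : ℂ)) *
          (Real.log τ : ℂ)) =
      (∑' p : ℕ × ℕ,
        A p.1 p.2 * Complex.exp (((p.1 : ℂ) - 2 + r * (p.2 : ℂ)) * (Real.log τ : ℂ))) +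
      ∑' p : ℕ × {j : ℕ // j ≠ 0},
        Abar p.1 (p.2 : ℕ) *
          Complex.exp (((p.1 : ℂ) - 2 + rbar * ((p.2 : ℕ) : ℂ)) * (Real.log τ : ℂ)) := by
  have hLe := (hsum.subtype mLeL).hasSum
  have hGt := (hsum.subtype mLeLᶜ).hasSum
  have hASum := hasSum_of_hasSum_mLeL _ hr hA hLe
  have hAbarSum := hasSum_of_hasSum_mLeLCompl _ hr hAbar hGt
  refine ⟨hASum.summable, hAbarSum.summable, ?_⟩
  rw [hASum.tsum_eq, hAbarSum.tsum_eq]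
  exact (hLe.add_compl hGt).tsum_eq

/-- Resummation of Appendix B (equations (B12)–(B20)) of the paper: if `r + r̄ = 5` and
the triply-indexed family `a_{klm} τ^{k−2+rl+r̄m}` (with `τ^c = exp(c·ln τ)`, `τ > 0`)
is summable, then, with `a_{ij} = ∑_{k+5l=i} a_{k,l+j,l}` and
`ā_{ij} = ∑_{k+5m=i} a_{k,m,m+j}`, the families `a_{ij} τ^{i−2+jr}` (over `ℕ×ℕ`) and
`ā_{ij} τ^{i−2+jr̄}` (over `ℕ×(ℕ∖{0})`) are summable and the sums agree. -/
theorem resummation_B (r rbar : ℂ) (hr : r + rbar = 5) (τ : ℝ) (hτ : 0 < τ)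
    (a : ℕ × ℕ × ℕ → ℂ) (A Abar : ℕ → ℕ → ℂ)
    (hA : ∀ i j : ℕ, A i j =
      ∑ l ∈ (Finset.range (i + 1)).filter (fun l => 5 * l ≤ i), a (i - 5 * l, l + j, l))
    (hAbar : ∀ i j : ℕ, Abar i j =
      ∑ m ∈ (Finset.range (i + 1)).filter (fun m => 5 * m ≤ i), a (i - 5 * m, m, m + j))
    (hsum : Summable (fun p : ℕ × ℕ × ℕ =>
      a p * Complex.exp (((p.1 : ℂ) - 2 + r * (p.2.1 : ℂ) + rbar * (p.2.2 : ℂ)) *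
        (Real.log τ : ℂ)))) :
    Summable (fun p : ℕ × ℕ =>
        A p.1 p.2 * Complex.exp (((p.1 : ℂ) - 2 + r * (p.2 : ℂ)) * (Real.log τ : ℂ))) ∧
    Summable (fun p : ℕ × {j : ℕ // j ≠ 0} =>
        Abar p.1 (p.2 : ℕ) *
          Complex.exp (((p.1 : ℂ) - 2 + rbar * ((p.2 : ℕ) : ℂ)) * (Real.log τ : ℂ))) ∧
    ∑' p : ℕ × ℕ × ℕ,
        a p * Complex.exp (((p.1 : ℂ) - 2 + r * (p.2.1 : ℂ) + rbar * (p.2.2 : ℂ)) *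
          (Real.log τ : ℂ)) =
      (∑' p : ℕ × ℕ,
        A p.1 p.2 * Complex.exp (((p.1 : ℂ) - 2 + r * (p.2 : ℂ)) * (Real.log τ : ℂ))) +
      ∑' p : ℕ × {j : ℕ // j ≠ 0},
        Abar p.1 (p.2 : ℕ) *
          Complex.exp (((p.1 : ℂ) - 2 + rbar * ((p.2 : ℕ) : ℂ)) * (Real.log τ : ℂ)) :=
  resummation_B_general r rbar hr τ a A Abar hA hAbar hsum
end
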